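/- With A_{i,j} = v_i e_j·∇_v − v_j e_i·∇_v, T = v·∇_x and S_{i,j} = v_i ∂_{x_j} − v_j ∂_{x_i} acting on smooth functions of (x,v) ∈ ℝ^d × S^{d−1}, one has the commutator identities: Σ_{i<j} [A_{i,j}, S_{i,j}] = −(d−1) T, and S_{i,j} commutes with S_{k,ℓ} and with T for all indices. -/

import Mathlib

noncomputable section

open scoped BigOperators

variable {d : ℕ}

/-- Partial derivative in the `i`-th space coordinate of a function `f(x,v)`. -/
def pdx (i : Fin d) (f : EuclideanSpace ℝ (Fin d) → EuclideanSpace ℝ (Fin d) → ℝ) :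
    EuclideanSpace ℝ (Fin d) → EuclideanSpace ℝ (Fin d) → ℝ :=
  fun x v => fderiv ℝ (fun y => f y v) x (EuclideanSpace.single i 1)

/-- Partial derivative in the `i`-th velocity coordinate of a function `f(x,v)`. -/
def pdv (i : Fin d) (f : EuclideanSpace ℝ (Fin d) → EuclideanSpace ℝ (Fin d) → ℝ) :
    EuclideanSpace ℝ (Fin d) → EuclideanSpace ℝ (Fin d) → ℝ :=
  fun x v => fderiv ℝ (fun w => f x w) v (EuclideanSpace.single i 1)

/-- The angular momentum operator `A_{i,j} = v_i ∂_{v_j} − v_j ∂_{v_i}` (acting in `v`). -/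
def Axv (i j : Fin d) (f : EuclideanSpace ℝ (Fin d) → EuclideanSpace ℝ (Fin d) → ℝ) :
    EuclideanSpace ℝ (Fin d) → EuclideanSpace ℝ (Fin d) → ℝ :=
  fun x v => v i * pdv j f x v - v j * pdv i f x v

/-- The operator `S_{i,j} = v_i ∂_{x_j} − v_j ∂_{x_i}` (acting in `x`). -/
def Sxv (i j : Fin d) (f : EuclideanSpace ℝ (Fin d) → EuclideanSpace ℝ (Fin d) → ℝ) :
    EuclideanSpace ℝ (Fin d) → EuclideanSpace ℝ (Fin d) → ℝ :=
  fun x v => v i * pdx j f x v - v j * pdx i f x v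

/-- The free transport operator `T = v·∇_x`. -/
def Txv (f : EuclideanSpace ℝ (Fin d) → EuclideanSpace ℝ (Fin d) → ℝ) :
    EuclideanSpace ℝ (Fin d) → EuclideanSpace ℝ (Fin d) → ℝ :=
  fun x v => ∑ k, v k * pdx k f x v

section Aux

variable {d : ℕ}

local notation "E" => EuclideanSpace ℝ (Fin d)

private lemma aux_fix_right {G : E × EuclideanSpace ℝ (Fin d) → ℝ} {x v : E}
    (hG : DifferentiableAt ℝ G (x, v)) (w : E) :
    fderiv ℝ (fun y => G (y, v)) x w = fderiv ℝ G (x, v) (w, 0) := by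
  have h : HasFDerivAt (fun y : E => G (y, v))
      ((fderiv ℝ G (x, v)).comp ((ContinuousLinearMap.id ℝ E).prod 0)) x :=
    hG.hasFDerivAt.comp x (HasFDerivAt.prodMk (hasFDerivAt_id x) (hasFDerivAt_const v x))
  rw [h.fderiv]
  simp

private lemma aux_fix_left {G : E × EuclideanSpace ℝ (Fin d) → ℝ} {x v : E}
    (hG : DifferentiableAt ℝ G (x, v)) (w : E) :
    fderiv ℝ (fun u => G (x, u)) v w = fderiv ℝ G (x, v) (0, w) := by
  have h : HasFDerivAt (fun u : E => G (x, u))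
      ((fderiv ℝ G (x, v)).comp (ContinuousLinearMap.prod 0 (ContinuousLinearMap.id ℝ E))) v :=
    hG.hasFDerivAt.comp v (HasFDerivAt.prodMk (hasFDerivAt_const x v) (hasFDerivAt_id v))
  rw [h.fderiv]
  simp

private lemma sum_pairs (g : Fin d → ℝ) :
    (∑ i, ∑ j, if i < j then g i + g j else 0) = ((d : ℝ) - 1) * ∑ k, g k := by
  have h1 : (∑ i, ∑ j, if i < j then g i + g j else 0)
      = (∑ i, ∑ j, if i < j then g i else 0) + (∑ i, ∑ j, if i < j then g j else 0) := by
    rw [← Finset.sum_add_distrib]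
    refine Finset.sum_congr rfl fun i _ => ?_
    rw [← Finset.sum_add_distrib]
    refine Finset.sum_congr rfl fun j _ => ?_
    split_ifs <;> simp
  have h2 : (∑ i : Fin d, ∑ j : Fin d, if i < j then g j else 0)
      = ∑ i : Fin d, ∑ j : Fin d, if j < i then g i else 0 := by
    rw [Finset.sum_comm]
  rw [h1, h2, ← Finset.sum_add_distrib]
  have h3 : ∀ i : Fin d, ((∑ j, if i < j then g i else 0) + ∑ j, if j < i then g i else 0)
      = ((d : ℝ) - 1) * g i := by
    intro i
    rw [← Finset.sum_add_distrib]
    have : ∀ j : Fin d, ((if i < j then g i else 0) + if j < i then g i else 0)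
        = g i - (if i = j then g i else 0) := by
      intro j
      rcases lt_trichotomy i j with h | h | h
      · simp [h, h.ne, (not_lt_of_gt h)]
      · simp [h]
      · simp [h, h.ne', (not_lt_of_gt h)]
    rw [Finset.sum_congr rfl fun j _ => this j, Finset.sum_sub_distrib]
    simp [Finset.sum_ite_eq, mul_comm]
    ring
  rw [Finset.sum_congr rfl fun i _ => h3 i, Finset.mul_sum]

end Aux

/-- `Σ_{i<j} [A_{i,j}, S_{i,j}] = −(d−1) T`, and the operators `S_{i,j}` commute with each
other and with `T`, for smooth functions of `(x,v) ∈ ℝ^d × S^{d−1}`. -/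
theorem commutator_A_S_eq {d : ℕ} (hd : 2 ≤ d)
    (f : EuclideanSpace ℝ (Fin d) → EuclideanSpace ℝ (Fin d) → ℝ)
    (hf : ContDiff ℝ (⊤ : ℕ∞) (fun p : EuclideanSpace ℝ (Fin d) × EuclideanSpace ℝ (Fin d) => f p.1 p.2))
    (x v : EuclideanSpace ℝ (Fin d)) (hv : ‖v‖ = 1) :
    ((∑ i, ∑ j, if i < j then Axv i j (Sxv i j f) x v - Sxv i j (Axv i j f) x v else 0)
        = -((d : ℝ) - 1) * Txv f x v)
    ∧ (∀ i j k l : Fin d, Sxv i j (Sxv k l f) x v = Sxv k l (Sxv i j f) x v)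
    ∧ (∀ i j : Fin d, Sxv i j (Txv f) x v = Txv (Sxv i j f) x v) := by
  classical

  set F : EuclideanSpace ℝ (Fin d) × EuclideanSpace ℝ (Fin d) → ℝ := fun p => f p.1 p.2 with hFdef
  have hfF : ContDiff ℝ (⊤ : ℕ∞) F := hf
  have hF1 : Differentiable ℝ F := hfF.differentiable (by simp)
  have hF2 : Differentiable ℝ (fderiv ℝ F) := (hfF.fderiv_right (m := 1) (WithTop.coe_le_coe.mpr le_top)).differentiable one_ne_zero
  -- basis vectors in the product space
  set X : Fin d → EuclideanSpace ℝ (Fin d) × EuclideanSpace ℝ (Fin d) := fun k => (EuclideanSpace.single k 1, 0) with hXdef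
  set V : Fin d → EuclideanSpace ℝ (Fin d) × EuclideanSpace ℝ (Fin d) := fun k => (0, EuclideanSpace.single k 1) with hVdef
  -- first partials as full fderiv
  have hPdx : ∀ i : Fin d, pdx i f = fun x v => fderiv ℝ F (x, v) (X i) := by
    intro i; funext y u
    exact aux_fix_right (hF1 (y, u)) _
  have hPdv : ∀ i : Fin d, pdv i f = fun x v => fderiv ℝ F (x, v) (V i) := by
    intro i; funext y u
    exact aux_fix_left (hF1 (y, u)) _
  -- derivative of p ↦ fderiv F p a
  have hPa : ∀ (a : EuclideanSpace ℝ (Fin d) × EuclideanSpace ℝ (Fin d)) (p : EuclideanSpace ℝ (Fin d) × EuclideanSpace ℝ (Fin d)), HasFDerivAt (fun q => fderiv ℝ F q a)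
      ((ContinuousLinearMap.apply ℝ ℝ a).comp (fderiv ℝ (fderiv ℝ F) p)) p := by
    intro a p
    exact (ContinuousLinearMap.apply ℝ ℝ a).hasFDerivAt.comp p (hF2 p).hasFDerivAt
  set D2 : EuclideanSpace ℝ (Fin d) × EuclideanSpace ℝ (Fin d) → EuclideanSpace ℝ (Fin d) × EuclideanSpace ℝ (Fin d) → ℝ := fun a b => fderiv ℝ (fderiv ℝ F) (x, v) a b with hD2def
  have hsymm : ∀ a b, D2 a b = D2 b a := by
    intro a b
    exact ((hfF.contDiffAt (x := (x, v))).isSymmSndFDerivAt (by rw [minSmoothness_of_isRCLikeNormedField]; exact le_trans (by norm_cast) (WithTop.coe_le_coe.mpr (le_top : (2 : ℕ∞) ≤ ⊤)))) a b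
  set P : EuclideanSpace ℝ (Fin d) × EuclideanSpace ℝ (Fin d) → ℝ := fun a => fderiv ℝ F (x, v) a with hPdef
  -- HasFDerivAt for z ↦ fderiv F (z, v) a at x, and u ↦ fderiv F (x, u) a at v
  have hGx : ∀ a : EuclideanSpace ℝ (Fin d) × EuclideanSpace ℝ (Fin d), HasFDerivAt (fun z : EuclideanSpace ℝ (Fin d) => fderiv ℝ F (z, v) a)
      (((ContinuousLinearMap.apply ℝ ℝ a).comp (fderiv ℝ (fderiv ℝ F) (x, v))).comp
        ((ContinuousLinearMap.id ℝ (EuclideanSpace ℝ (Fin d))).prod 0)) x := by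
    intro a
    exact (hPa a (x, v)).comp x (HasFDerivAt.prodMk (hasFDerivAt_id x) (hasFDerivAt_const v x) :
      HasFDerivAt (fun z : EuclideanSpace ℝ (Fin d) => (z, v)) ((ContinuousLinearMap.id ℝ (EuclideanSpace ℝ (Fin d))).prod 0) x)
  have hGv : ∀ a : EuclideanSpace ℝ (Fin d) × EuclideanSpace ℝ (Fin d), HasFDerivAt (fun u : EuclideanSpace ℝ (Fin d) => fderiv ℝ F (x, u) a)
      (((ContinuousLinearMap.apply ℝ ℝ a).comp (fderiv ℝ (fderiv ℝ F) (x, v))).comp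
        (ContinuousLinearMap.prod 0 (ContinuousLinearMap.id ℝ (EuclideanSpace ℝ (Fin d))))) v := by
    intro a
    exact (hPa a (x, v)).comp v (HasFDerivAt.prodMk (hasFDerivAt_const x v) (hasFDerivAt_id v) :
      HasFDerivAt (fun u : EuclideanSpace ℝ (Fin d) => (x, u)) (ContinuousLinearMap.prod 0 (ContinuousLinearMap.id ℝ (EuclideanSpace ℝ (Fin d)))) v)
  -- key computation: pdx of an S/A-type expression
  have keyX : ∀ (a b : EuclideanSpace ℝ (Fin d) × EuclideanSpace ℝ (Fin d)) (i j k : Fin d),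
      pdx k (fun x v => v i * fderiv ℝ F (x, v) a - v j * fderiv ℝ F (x, v) b) x v
        = v i * D2 (X k) a - v j * D2 (X k) b := by
    intro a b i j k
    have h := ((hGx a).const_mul (v i)).fun_sub ((hGx b).const_mul (v j))
    show fderiv ℝ (fun z : EuclideanSpace ℝ (Fin d) => v i * fderiv ℝ F (z, v) a - v j * fderiv ℝ F (z, v) b) x
        (EuclideanSpace.single k 1) = _
    rw [h.fderiv]
    simp [hD2def, hXdef]
  have keyV : ∀ (a b : EuclideanSpace ℝ (Fin d) × EuclideanSpace ℝ (Fin d)) (i j k : Fin d),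
      pdv k (fun x v => v i * fderiv ℝ F (x, v) a - v j * fderiv ℝ F (x, v) b) x v
        = ((EuclideanSpace.single k 1 : EuclideanSpace ℝ (Fin d)) i * P a + v i * D2 (V k) a)
          - ((EuclideanSpace.single k 1 : EuclideanSpace ℝ (Fin d)) j * P b + v j * D2 (V k) b) := by
    intro a b i j k
    have hci : HasFDerivAt (fun u : EuclideanSpace ℝ (Fin d) => u i) (EuclideanSpace.proj i : EuclideanSpace ℝ (Fin d) →L[ℝ] ℝ) v :=
      (EuclideanSpace.proj i : EuclideanSpace ℝ (Fin d) →L[ℝ] ℝ).hasFDerivAt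
    have hcj : HasFDerivAt (fun u : EuclideanSpace ℝ (Fin d) => u j) (EuclideanSpace.proj j : EuclideanSpace ℝ (Fin d) →L[ℝ] ℝ) v :=
      (EuclideanSpace.proj j : EuclideanSpace ℝ (Fin d) →L[ℝ] ℝ).hasFDerivAt
    have h := (hci.fun_mul (hGv a)).fun_sub (hcj.fun_mul (hGv b))
    show fderiv ℝ (fun u : EuclideanSpace ℝ (Fin d) => u i * fderiv ℝ F (x, u) a - u j * fderiv ℝ F (x, u) b) v
        (EuclideanSpace.single k 1) = _
    rw [h.fderiv]
    simp [hD2def, hVdef, hPdef]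
    ring
  -- rewriting S, A, T through F
  have hS : ∀ i j : Fin d, Sxv i j f
      = fun x v => v i * fderiv ℝ F (x, v) (X j) - v j * fderiv ℝ F (x, v) (X i) := by
    intro i j; funext y u; simp only [Sxv, hPdx]
  have hA : ∀ i j : Fin d, Axv i j f
      = fun x v => v i * fderiv ℝ F (x, v) (V j) - v j * fderiv ℝ F (x, v) (V i) := by
    intro i j; funext y u; simp only [Axv, hPdv]
  have hT : Txv f = fun x v => ∑ m, v m * fderiv ℝ F (x, v) (X m) := by
    funext y u; simp only [Txv, hPdx]
  -- pdx of Txv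
  have keyT : ∀ k : Fin d, pdx k (Txv f) x v = ∑ m, v m * D2 (X k) (X m) := by
    intro k
    rw [hT]
    have h : HasFDerivAt (fun z : EuclideanSpace ℝ (Fin d) => ∑ m : Fin d, v m * fderiv ℝ F (z, v) (X m))
        (∑ m : Fin d, (v m) • ((((ContinuousLinearMap.apply ℝ ℝ (X m)).comp
          (fderiv ℝ (fderiv ℝ F) (x, v))).comp
          ((ContinuousLinearMap.id ℝ (EuclideanSpace ℝ (Fin d))).prod 0)))) x := by
      exact HasFDerivAt.fun_sum fun m _ => (hGx (X m)).const_mul (v m)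
    show fderiv ℝ (fun z : EuclideanSpace ℝ (Fin d) => ∑ m : Fin d, v m * fderiv ℝ F (z, v) (X m)) x
        (EuclideanSpace.single k 1) = _
    rw [h.fderiv]
    simp [hD2def, hXdef]
  -- pdx of Sxv / Axv at (x, v)
  have pdxS : ∀ i j k : Fin d,
      pdx k (Sxv i j f) x v = v i * D2 (X k) (X j) - v j * D2 (X k) (X i) := by
    intro i j k; rw [hS]; exact keyX _ _ i j k
  have pdxA : ∀ i j k : Fin d,
      pdx k (Axv i j f) x v = v i * D2 (X k) (V j) - v j * D2 (X k) (V i) := by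
    intro i j k; rw [hA]; exact keyX _ _ i j k
  have pdvS : ∀ i j k : Fin d,
      pdv k (Sxv i j f) x v
        = ((EuclideanSpace.single k 1 : EuclideanSpace ℝ (Fin d)) i * P (X j) + v i * D2 (V k) (X j))
          - ((EuclideanSpace.single k 1 : EuclideanSpace ℝ (Fin d)) j * P (X i) + v j * D2 (V k) (X i)) := by
    intro i j k; rw [hS]; exact keyV _ _ i j k
  refine ⟨?_, ?_, ?_⟩
  · -- main commutator identity
    have hterm : ∀ i j : Fin d, i < j →
        Axv i j (Sxv i j f) x v - Sxv i j (Axv i j f) x v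
          = -(v i * P (X i) + v j * P (X j)) := by
      intro i j hij
      have hne : i ≠ j := hij.ne
      simp only [Axv, Sxv, pdvS, pdxA]
      rw [EuclideanSpace.single_apply, EuclideanSpace.single_apply,
        EuclideanSpace.single_apply, EuclideanSpace.single_apply]
      simp only [if_pos rfl, if_neg hne, if_neg hne.symm]
      rw [hsymm (V j) (X j), hsymm (V j) (X i), hsymm (V i) (X j), hsymm (V i) (X i)]
      norm_num
      ring
    have hsum : (∑ i, ∑ j, if i < j then Axv i j (Sxv i j f) x v - Sxv i j (Axv i j f) x v else 0)
        = ∑ i, ∑ j, if i < j then (-(v i * P (X i))) + (-(v j * P (X j))) else 0 := by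
      refine Finset.sum_congr rfl fun i _ => Finset.sum_congr rfl fun j _ => ?_
      split_ifs with h
      · rw [hterm i j h]; ring
      · rfl
    rw [hsum, sum_pairs (fun k => -(v k * P (X k)))]
    have : Txv f x v = ∑ k, v k * P (X k) := by
      rw [hT]
    rw [this, Finset.sum_neg_distrib]
    ring
  · -- S commute with S
    intro i j k l
    simp only [Sxv, pdxS]
    rw [hsymm (X j) (X l), hsymm (X j) (X k), hsymm (X i) (X l), hsymm (X i) (X k)]
    ring
  · -- S commute with T
    intro i j
    have hTS : Txv (Sxv i j f) x v = ∑ k, v k * (v i * D2 (X k) (X j) - v j * D2 (X k) (X i)) := by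
      simp only [Txv]
      exact Finset.sum_congr rfl fun k _ => by rw [pdxS]
    simp only [Sxv, keyT, hTS]
    rw [Finset.mul_sum, Finset.mul_sum, ← Finset.sum_sub_distrib]
    refine Finset.sum_congr rfl fun k _ => ?_
    rw [hsymm (X j) (X k), hsymm (X i) (X k)]
    ring
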